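/- Let l ≥ 1 and n ≥ 2l, and let H_l denote the class of string functions over Σ associated with an unconstrained hidden Markov process on l hidden states. Then for any family (p(u))_{u∈Σ^{n+1}} of reals: there exists q ∈ H_l with q(u) = p(u) for all u ∈ Σ^{n+1} if and only if (i) for every a ∈ Σ there exists q_a ∈ H_l with q_a(v) = p(av) for all v ∈ Σ^n, and (ii) there exists q' ∈ H_l with q'(v) = Σ_{a∈Σ} p(va) for all v ∈ Σ^n. -/

import Mathlib

open Matrix

/-- For `v = a₁…aₙ`, the product `T_{aₙ} ⋯ T_{a₁}`. -/
def wordProd {A R : Type*} [Semiring R] {d : ℕ}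
    (T : A → Matrix (Fin d) (Fin d) R) (v : List A) : Matrix (Fin d) (Fin d) R :=
  (v.reverse.map T).prod

/-- `p` is associated with an unconstrained hidden Markov process on `l` hidden states. -/
def IsHMM {A : Type*} [Fintype A] (l : ℕ) (p : List A → ℝ) : Prop :=
  ∃ (Am : Matrix (Fin l) (Fin l) ℝ) (E : Fin l → A → ℝ) (π : Fin l → ℝ),
    (∀ i j, 0 ≤ Am i j) ∧ (∀ i, ∑ j, Am i j = 1) ∧
    (∀ i a, 0 ≤ E i a) ∧ (∀ i, ∑ a : A, E i a = 1) ∧ (∀ i, 0 ≤ π i) ∧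
    ∀ v : List A,
      p v = (fun _ => (1 : ℝ)) ⬝ᵥ
        (wordProd (fun a => Amᵀ * Matrix.diagonal fun i => E i a) v) *ᵥ π

/-!
A function in `H_l` is determined by its values on words of length `< 2l`: the difference of
two of them is the series `w ↦ φ (T_w x)` of a linear representation on a space of dimension
`2l`, and the subspaces spanned by the vectors `T_w x` with `|w| < k` stop growing once
`k` reaches the dimension. Functions in `H_l` are also consistent, `∑ₐ q(va) = q(v)`, so
agreement on the words of one length `m` propagates to all shorter words.

If `q'` realises the marginals of `p` and `q_a` its shifts, then `v ↦ q'(av)` is again in `H_l`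
and marginalising shows it agrees with `q_a` on words of length `n - 1 ≥ 2l - 1`; hence the two
are equal and `q'` extends `p`. The converse is restriction.
-/

section Krylov

variable {K V : Type*} [Field K] [AddCommGroup V] [Module K V] [FiniteDimensional K V]

lemma iterate_bot_le_iterate_finrank {F : Submodule K V → Submodule K V} (hF : Monotone F)
    (k : ℕ) : F^[k] ⊥ ≤ F^[Module.finrank K V] ⊥ := by
  set D := Module.finrank K V
  have hmono : Monotone fun n => F^[n] ⊥ := hF.monotone_iterate_of_le_map bot_le
  obtain ⟨m, hmD, hfix⟩ : ∃ m ≤ D, F (F^[m] ⊥) = F^[m] ⊥ := by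
    by_contra! hstrict
    have hrank : ∀ m ≤ D + 1, m ≤ Module.finrank K (F^[m] ⊥) := by
      intro m
      induction m with
      | zero => simp
      | succ m ih =>
        intro hm
        have hlt : F^[m] ⊥ < F^[m + 1] ⊥ := by
          refine lt_of_le_of_ne (hmono m.le_succ) fun h => hstrict m (by omega) ?_
          rw [Function.iterate_succ_apply'] at h; exact h.symm
        have := Submodule.finrank_lt_finrank_of_lt hlt
        have := ih (by omega)
        omega
    have := hrank (D + 1) le_rfl
    have := Submodule.finrank_le (F^[D + 1] ⊥)
    omega
  have hstable : ∀ j, F^[m + j] ⊥ = F^[m] ⊥ := fun j => by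
    rw [add_comm, Function.iterate_add_apply, Function.iterate_fixed hfix]
  calc F^[k] ⊥ ≤ F^[m + k] ⊥ := hmono (by omega)
    _ = F^[m + (D - m)] ⊥ := by rw [hstable, hstable]
    _ = F^[D] ⊥ := by rw [Nat.add_sub_cancel' hmD]

lemma apply_list_prod_map_eq_zero_of_forall_length_lt {A : Type*} (M : A → Module.End K V)
    (x : V) (φ : Module.Dual K V)
    (h : ∀ w : List A, w.length < Module.finrank K V → φ ((w.map M).prod x) = 0)
    (w : List A) : φ ((w.map M).prod x) = 0 := by
  -- `F^[k] ⊥` is the span of the vectors `(w.map M).prod x` with `w.length < k`.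
  let F : Submodule K V → Submodule K V := fun U => K ∙ x ⊔ ⨆ a, U.map (M a)
  have hF : Monotone F := fun U U' hU =>
    sup_le_sup_left (iSup_mono fun a => Submodule.map_mono hU) _
  let S : ℕ → Submodule K V := fun k =>
    Submodule.span K {y | ∃ w : List A, w.length < k ∧ (w.map M).prod x = y}
  have hmem : ∀ w : List A, (w.map M).prod x ∈ F^[w.length + 1] ⊥ := by
    intro w
    induction w with
    | nil => exact Submodule.mem_sup_left (Submodule.mem_span_singleton_self x)
    | cons a w ih =>
      rw [List.length_cons, Function.iterate_succ_apply']
      refine Submodule.mem_sup_right (Submodule.mem_iSup_of_mem a ?_)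
      exact ⟨_, ih, rfl⟩
  have hFS : ∀ k, F (S k) ≤ S (k + 1) := by
    intro k
    refine sup_le ?_ (iSup_le fun a => ?_)
    · rw [Submodule.span_singleton_le_iff_mem]
      exact Submodule.subset_span ⟨[], by simp, rfl⟩
    · rw [Submodule.map_span_le]
      rintro _ ⟨w, hw, rfl⟩
      exact Submodule.subset_span ⟨a :: w, by simpa using hw, rfl⟩
  have hle : ∀ k, F^[k] ⊥ ≤ S k := by
    intro k
    induction k with
    | zero => exact bot_le
    | succ k ih => rw [Function.iterate_succ_apply']; exact (hF ih).trans (hFS k)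
  have hker : S (Module.finrank K V) ≤ LinearMap.ker φ := by
    rw [Submodule.span_le]
    rintro _ ⟨w, hw, rfl⟩
    exact h w hw
  exact hker (hle _ (iterate_bot_le_iterate_finrank hF _ (hmem w)))

end Krylov

lemma wordProd_cons {A R : Type*} [Semiring R] {d : ℕ} (T : A → Matrix (Fin d) (Fin d) R)
    (a : A) (v : List A) : wordProd T (a :: v) = wordProd T v * T a := by
  simp [wordProd]

lemma wordProd_append_singleton {A R : Type*} [Semiring R] {d : ℕ}
    (T : A → Matrix (Fin d) (Fin d) R) (v : List A) (a : A) :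
    wordProd T (v ++ [a]) = T a * wordProd T v := by
  simp [wordProd]

lemma dotProduct_wordProd_mulVec_eq_of_forall_length_lt {A K : Type*} [Field K] {d₁ d₂ : ℕ}
    (T₁ : A → Matrix (Fin d₁) (Fin d₁) K) (T₂ : A → Matrix (Fin d₂) (Fin d₂) K)
    (u₁ π₁ : Fin d₁ → K) (u₂ π₂ : Fin d₂ → K)
    (h : ∀ w : List A, w.length < d₁ + d₂ →
      u₁ ⬝ᵥ wordProd T₁ w *ᵥ π₁ = u₂ ⬝ᵥ wordProd T₂ w *ᵥ π₂) (w : List A) :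
    u₁ ⬝ᵥ wordProd T₁ w *ᵥ π₁ = u₂ ⬝ᵥ wordProd T₂ w *ᵥ π₂ := by
  let M : A → Module.End K ((Fin d₁ → K) × (Fin d₂ → K)) := fun a =>
    (toLin' (T₁ a)).prodMap (toLin' (T₂ a))
  let φ : Module.Dual K ((Fin d₁ → K) × (Fin d₂ → K)) :=
    (dotProductEquiv K _ u₁).coprod (-dotProductEquiv K _ u₂)
  have hprod : ∀ L : List A,
      (L.map M).prod = (toLin' (L.map T₁).prod).prodMap (toLin' (L.map T₂).prod) := by
    intro L
    induction L with
    | nil => simp only [List.map_nil, List.prod_nil, toLin'_one]; rfl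
    | cons a L ih =>
      simp only [List.map_cons, List.prod_cons, ih, toLin'_mul, ← Module.End.mul_eq_comp,
        LinearMap.prodMap_mul, M]
  have hφ : ∀ w : List A, φ ((w.reverse.map M).prod (π₁, π₂)) =
      u₁ ⬝ᵥ wordProd T₁ w *ᵥ π₁ - u₂ ⬝ᵥ wordProd T₂ w *ᵥ π₂ := by
    intro w
    rw [hprod]
    simp [φ, wordProd, sub_eq_add_neg]
  have := apply_list_prod_map_eq_zero_of_forall_length_lt M (π₁, π₂) φ
    (fun w hw => by
      rw [← w.reverse_reverse, hφ, sub_eq_zero]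
      exact h _ (by simpa using hw)) w.reverse
  rwa [hφ, sub_eq_zero] at this

lemma eq_of_length_le_of_sum_append_singleton {A R : Type*} [Fintype A] [AddCommMonoid R]
    {f g : List A → R} (hf : ∀ v, ∑ a, f (v ++ [a]) = f v) (hg : ∀ v, ∑ a, g (v ++ [a]) = g v)
    {m : ℕ} (h : ∀ v : List A, v.length = m → f v = g v) {v : List A} (hv : v.length ≤ m) :
    f v = g v := by
  suffices ∀ k, ∀ v : List A, v.length + k = m → f v = g v from this (m - v.length) v (by omega)
  intro k
  induction k with
  | zero => exact h
  | succ k ih =>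
    intro v hv
    rw [← hf, ← hg]
    exact Finset.sum_congr rfl fun a _ => ih _ (by simp; omega)

lemma sum_one_dotProduct_transpose_mul_diagonal_mulVec {A : Type*} [Fintype A] {l : ℕ}
    {Am : Matrix (Fin l) (Fin l) ℝ} {E : Fin l → A → ℝ} (hA : ∀ i, ∑ j, Am i j = 1)
    (hE : ∀ i, ∑ a, E i a = 1) (y : Fin l → ℝ) :
    ∑ a, (fun _ => (1 : ℝ)) ⬝ᵥ (Amᵀ * diagonal fun i => E i a) *ᵥ y = (fun _ => 1) ⬝ᵥ y := by
  have hdiag : ∑ a, (diagonal fun i => E i a) = 1 := by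
    ext i j
    by_cases h : i = j <;> simp [Matrix.sum_apply, one_apply, h, hE]
  have hrow : Am *ᵥ (fun _ => 1) = fun _ => 1 := funext fun i => by simp [mulVec, dotProduct, hA]
  calc ∑ a, (fun _ => (1 : ℝ)) ⬝ᵥ (Amᵀ * diagonal fun i => E i a) *ᵥ y
      = (fun _ => 1) ⬝ᵥ (Amᵀ * ∑ a, diagonal fun i => E i a) *ᵥ y := by
        rw [← dotProduct_sum, Matrix.mul_sum, sum_mulVec]
    _ = (Am *ᵥ fun _ => 1) ⬝ᵥ y := by
        rw [hdiag, mul_one, dotProduct_mulVec, vecMul_transpose]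
    _ = (fun _ => 1) ⬝ᵥ y := by rw [hrow]

namespace IsHMM

variable {A : Type*} [Fintype A] {l : ℕ} {q : List A → ℝ}

lemma sum_append_singleton (hq : IsHMM l q) (v : List A) : ∑ a, q (v ++ [a]) = q v := by
  obtain ⟨Am, E, π, -, hA, -, hE, -, hq⟩ := hq
  set T : A → Matrix (Fin l) (Fin l) ℝ := fun a => Amᵀ * diagonal fun i => E i a
  have hstep : ∀ a, q (v ++ [a]) = (fun _ => (1 : ℝ)) ⬝ᵥ T a *ᵥ (wordProd T v *ᵥ π) :=
    fun a => by rw [hq, wordProd_append_singleton, mulVec_mulVec]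
  rw [Finset.sum_congr rfl fun a _ => hstep a, hq]
  exact sum_one_dotProduct_transpose_mul_diagonal_mulVec hA hE _

lemma comp_cons (hq : IsHMM l q) (a : A) : IsHMM l fun v => q (a :: v) := by
  obtain ⟨Am, E, π, hA₀, hA, hE₀, hE, hπ₀, hq⟩ := hq
  refine ⟨Am, E, (Amᵀ * diagonal fun i => E i a) *ᵥ π, hA₀, hA, hE₀, hE, fun i => ?_,
    fun v => (hq (a :: v)).trans (by rw [wordProd_cons, mulVec_mulVec])⟩
  simp only [mulVec, dotProduct, mul_diagonal, transpose_apply]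
  exact Finset.sum_nonneg fun j _ => mul_nonneg (mul_nonneg (hA₀ j i) (hE₀ j a)) (hπ₀ j)

lemma eq_of_forall_length_lt {q' : List A → ℝ} (hq : IsHMM l q) (hq' : IsHMM l q')
    (h : ∀ w : List A, w.length < 2 * l → q w = q' w) : q = q' := by
  obtain ⟨Am, E, π, -, -, -, -, -, hq⟩ := hq
  obtain ⟨Am', E', π', -, -, -, -, -, hq'⟩ := hq'
  funext w
  rw [hq, hq']
  refine dotProduct_wordProd_mulVec_eq_of_forall_length_lt _ _ _ _ _ _ (fun w hw => ?_) w
  rw [← hq, ← hq']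
  exact h w (by omega)

end IsHMM

theorem stmt13_general {A : Type*} [Fintype A] (l n : ℕ)
    (hn : 2 * l ≤ n) (p : List A → ℝ) :
    (∃ q : List A → ℝ, IsHMM l q ∧ ∀ u : List A, u.length = n + 1 → q u = p u) ↔
      ((∀ a : A, ∃ q : List A → ℝ, IsHMM l q ∧
          ∀ v : List A, v.length = n → q v = p (a :: v)) ∧
        (∃ q' : List A → ℝ, IsHMM l q' ∧
          ∀ v : List A, v.length = n → q' v = ∑ a : A, p (v ++ [a]))) := by
  constructor
  · rintro ⟨q, hq, hqp⟩
    refine ⟨fun a => ⟨_, hq.comp_cons a, fun v hv => hqp _ (by simp [hv])⟩, q, hq, fun v hv => ?_⟩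
    rw [← hq.sum_append_singleton v]
    exact Finset.sum_congr rfl fun a _ => hqp _ (by simp [hv])
  · rintro ⟨hshift, q', hq', hq'p⟩
    refine ⟨q', hq', fun u hu => ?_⟩
    obtain _ | ⟨a, v⟩ := u
    · simp at hu
    obtain ⟨qa, hqa, hqap⟩ := hshift a
    have hagree : ∀ t : List A, t.length + 1 = n → q' (a :: t) = qa t := by
      intro t ht
      rw [hq'p (a :: t) (by simp; omega), ← hqa.sum_append_singleton t]
      exact Finset.sum_congr rfl fun b _ => (hqap _ (by simp; omega)).symm
    have heq : (fun t => q' (a :: t)) = qa :=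
      (hq'.comp_cons a).eq_of_forall_length_lt hqa fun w hw =>
        eq_of_length_le_of_sum_append_singleton (hq'.comp_cons a).sum_append_singleton
          hqa.sum_append_singleton (m := n - 1) (fun t ht => hagree t (by omega)) (by omega)
    rw [congrFun heq v, hqap v (by simpa using hu)]

/-- For `l ≥ 1` and `n ≥ 2l`: a family `(p(u))_{u ∈ Σ^{n+1}}` extends to
a string function associated with an unconstrained hidden Markov process on `l` hidden
states iff each shifted family `(p(av))_{v ∈ Σⁿ}` and the marginal family
`(∑_a p(va))_{v ∈ Σⁿ}` do. -/
theorem stmt13 {A : Type*} [Fintype A] [Nonempty A] (l n : ℕ)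
    (hl : 1 ≤ l) (hn : 2 * l ≤ n) (p : List A → ℝ) :
    (∃ q : List A → ℝ, IsHMM l q ∧ ∀ u : List A, u.length = n + 1 → q u = p u) ↔
      ((∀ a : A, ∃ q : List A → ℝ, IsHMM l q ∧
          ∀ v : List A, v.length = n → q v = p (a :: v)) ∧
        (∃ q' : List A → ℝ, IsHMM l q' ∧
          ∀ v : List A, v.length = n → q' v = ∑ a : A, p (v ++ [a]))) :=
  stmt13_general l n hn p
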